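/- arXiv:2208.00809 — 2 statements merged into one kernel-verified Lean document; each statement's English description precedes it below -/
import Mathlib

section
/- Let K be a field and C a category equipped with the data of a Frobenius integration theory: for each object X a K-vector space F(X) and a K-vector space M(X); functorial K-linear pullbacks f* : F(Y) → F(X) and pushforwards f₊ : M(X) → M(Y) for morphisms f : X → Y; K-bilinear actions F(X) × M(X) → M(X) satisfying f₊((f* y) · μ) = y · f₊ μ; and K-linear functionals ∫_X : M(X) → K satisfying ∫_X μ = ∫_Y f₊ μ. Suppose moreover that the action on the object E is commutative: a · (b · ν) = b · (a · ν) for all a, b ∈ F(E) and ν ∈ M(E). Then for every parametric span consisting of morphisms s : E → X, t : E → Y, π : E → W in C, and for all x ∈ F(X), y ∈ F(Y), w ∈ F(W), μ ∈ M(E): ∫_Y y · t₊((s* x) · ((π* w) · μ)) = ∫_X x · s₊((t* y) · ((π* w) · μ)). -/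
open CategoryTheory Opposite

/-- **Adjoint rule for parametric spans.**
Given a Frobenius integration theory on a category `C` (contravariant "function"
spaces `F`, covariant "measure" spaces `M`, `K`-bilinear actions satisfying
Frobenius reciprocity, `K`-linear integrals satisfying naturality), if the action
on the object `E` is commutative, then for every parametric span
`s : E ⟶ X`, `t : E ⟶ Y`, `π : E ⟶ W` we have
`∫_Y y · t₊((s* x) · ((π* w) · μ)) = ∫_X x · s₊((t* y) · ((π* w) · μ))`. -/
theorem parametric_span_operator_adjoint
    (K : Type*) [Field K] (C : Type*) [Category C]
    (F : Cᵒᵖ ⥤ ModuleCat K) (M : C ⥤ ModuleCat K)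
    (act : ∀ X : C, F.obj (op X) →ₗ[K] M.obj X →ₗ[K] M.obj X)
    (intg : ∀ X : C, M.obj X →ₗ[K] K)
    (frobenius : ∀ {X Y : C} (f : X ⟶ Y) (y : F.obj (op Y)) (μ : M.obj X),
      M.map f (act X (F.map f.op y) μ) = act Y y (M.map f μ))
    (naturality : ∀ {X Y : C} (f : X ⟶ Y) (μ : M.obj X),
      intg X μ = intg Y (M.map f μ))
    (E X Y W : C) (s : E ⟶ X) (t : E ⟶ Y) (π : E ⟶ W)
    (commutative : ∀ (a b : F.obj (op E)) (ν : M.obj E),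
      act E a (act E b ν) = act E b (act E a ν)) :
    ∀ (x : F.obj (op X)) (y : F.obj (op Y)) (w : F.obj (op W)) (μ : M.obj E),
      intg Y (act Y y (M.map t (act E (F.map s.op x) (act E (F.map π.op w) μ)))) =
      intg X (act X x (M.map s (act E (F.map t.op y) (act E (F.map π.op w) μ)))) := by
  intro x y w μ
  rw [← frobenius, ← naturality, ← frobenius, ← naturality,
    commutative (F.map t.op y) (F.map s.op x)]
end

section
/- Let X, Y, E, W be measurable spaces, s : E → X, t : E → Y, π : E → W measurable functions, and μ a measure on E. Then for all measurable functions x : X → ℝ≥0∞, y : Y → ℝ≥0∞, w : W → ℝ≥0∞: ∫⁻_Y y d((μ.withDensity ((x ∘ s) * (w ∘ π))).map t) = ∫⁻_X x d((μ.withDensity ((y ∘ t) * (w ∘ π))).map s). -/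
open MeasureTheory
open scoped ENNReal

/-- **Adjoint (reverse-mode differentiation) rule for measurable parametric spans**:
for the layer operator `(x, w) ↦ (μ.withDensity ((x ∘ s) * (w ∘ π))).map t`, the
adjoint is obtained by permuting the source and target legs of the span. -/
theorem measurable_span_adjoint {X Y E W : Type*}
    [MeasurableSpace X] [MeasurableSpace Y] [MeasurableSpace E] [MeasurableSpace W]
    (s : E → X) (t : E → Y) (π : E → W)
    (hs : Measurable s) (ht : Measurable t) (hπ : Measurable π)
    (μ : Measure E) :
    ∀ (x : X → ℝ≥0∞) (y : Y → ℝ≥0∞) (w : W → ℝ≥0∞),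
      Measurable x → Measurable y → Measurable w →
      ∫⁻ b, y b ∂((μ.withDensity ((x ∘ s) * (w ∘ π))).map t) =
      ∫⁻ a, x a ∂((μ.withDensity ((y ∘ t) * (w ∘ π))).map s) := by
  intro x y w hx hy hw
  rw [lintegral_map hy ht, lintegral_map hx hs]
  erw [lintegral_withDensity_eq_lintegral_mul _ ((hx.comp hs).mul (hw.comp hπ)) (hy.comp ht),
    lintegral_withDensity_eq_lintegral_mul _ ((hy.comp ht).mul (hw.comp hπ)) (hx.comp hs)]
  congr 1
  ext e
  simp [Pi.mul_apply, Function.comp]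
  ring
end
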